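/- arXiv:0908.1095 — 4 statements merged into one kernel-verified Lean document; each statement's English description precedes it below -/
import Mathlib

section
/- Let Δ_s be the Pearson–Bellissard Laplace–Beltrami operator on L²(∂B, dμ) defined on characteristic functions by Δ_s χ_γ = −∑_{k=0}^{|γ|−1} (1/G_s(γ_k))·[(μ[γ_k] − μ[γ_{k+1}]) χ_γ − μ[γ](χ_{γ_k} − χ_{γ_{k+1}})]. Then for each finite path γ, the subspace E_γ spanned by the functions (1/μ[γ·e]) χ_{γ·e} − (1/μ[γ·e']) χ_{γ·e'}, over ordered pairs (e,e') of distinct edges extending γ, is an eigenspace of Δ_s with eigenvalue λ_γ = ∑_{k=0}^{|γ|−1} (μ[γ_{k+1}] − μ[γ_k])/G_s(γ_k) − μ[γ]/G_s(γ), and dim E_γ = n_γ − 1 where n_γ is the number of edges extending γ one generation further. -/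
/-!
A child `c` of `γ` shares the truncations `γ_0, …, γ_|γ|` with `γ`, so the defining sum for
`Δ χ_c` splits into a part depending only on `γ` and a last term, and one gets
`Δ χ_c = λ_γ χ_c + μ[c] w_γ` for a vector `w_γ` independent of the child `c`. Normalizing by
`μ[c]` makes the `w_γ`-part equal for all children, so it cancels in the differences
`χ_a / μ[a] − χ_b / μ[b]`. These differences span the vector span of the affinely independent
points `χ_c / μ[c]`, which has dimension `n_γ − 1`.
-/

open Finset Module

theorem LinearMap.map_inv_smul_sub_inv_smul {K V : Type*} [Field K] [AddCommGroup V]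
    [Module K V] (f : V →ₗ[K] V) {ℓ s t : K} {w x y : V} (hs : s ≠ 0) (ht : t ≠ 0)
    (hx : f x = ℓ • x + s • w) (hy : f y = ℓ • y + t • w) :
    f (s⁻¹ • x - t⁻¹ • y) = ℓ • (s⁻¹ • x - t⁻¹ • y) := by
  simp only [map_sub, map_smul, hx, hy, smul_add, smul_smul, inv_mul_cancel₀ hs,
    inv_mul_cancel₀ ht]
  module

theorem finrank_span_sub_of_linearIndependent {K V ι : Type*} [Field K] [AddCommGroup V]
    [Module K V] (s : Finset ι) (v : ι → V) (hv : LinearIndependent K fun i : s => v i) :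
    finrank K (Submodule.span K {x | ∃ a ∈ s, ∃ b ∈ s, a ≠ b ∧ x = v a - v b}) = #s - 1 := by
  have hspan : Submodule.span K {x | ∃ a ∈ s, ∃ b ∈ s, a ≠ b ∧ x = v a - v b} =
      vectorSpan K (Set.range fun i : s => v i) := by
    rw [vectorSpan_def]
    apply le_antisymm <;> rw [Submodule.span_le]
    · rintro _ ⟨a, ha, b, hb, -, rfl⟩
      exact Submodule.subset_span ⟨v a, ⟨⟨a, ha⟩, rfl⟩, v b, ⟨⟨b, hb⟩, rfl⟩, rfl⟩
    · rintro _ ⟨_, ⟨a, rfl⟩, _, ⟨b, rfl⟩, rfl⟩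
      by_cases hab : a = b
      · simp [hab]
      · exact Submodule.subset_span ⟨a, a.2, b, b.2, Subtype.coe_ne_coe.mpr hab, rfl⟩
  rw [hspan]
  rcases s.eq_empty_or_nonempty with rfl | hne
  · simp [Set.range_eq_empty]
  · have : Nonempty s := hne.to_subtype
    have := hv.affineIndependent.finrank_vectorSpan_add_one
    rw [Fintype.card_coe] at this
    omega

section Truncation

variable {P : Type*} {len : P → ℕ} {par : P → P} {trunc : P → ℕ → P}

theorem trunc_len (htrunc : ∀ γ k, trunc γ k = par^[len γ - k] γ) (γ : P) :
    trunc γ (len γ) = γ := by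
  rw [htrunc, Nat.sub_self, Function.iterate_zero_apply]

theorem trunc_of_par_eq (htrunc : ∀ γ k, trunc γ k = par^[len γ - k] γ) {γ c : P}
    (hpar : par c = γ) (hlen : len c = len γ + 1) {k : ℕ} (hk : k ≤ len γ) :
    trunc c k = trunc γ k := by
  rw [htrunc, htrunc, hlen, Nat.sub_add_comm hk, Function.iterate_succ_apply, hpar]

theorem sum_range_trunc_of_par_eq {N : Type*} [AddCommMonoid N]
    (htrunc : ∀ γ k, trunc γ k = par^[len γ - k] γ) {γ c : P}
    (hpar : par c = γ) (hlen : len c = len γ + 1) (F : P → P → N) :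
    ∑ k ∈ range (len c), F (trunc c k) (trunc c (k + 1)) =
      ∑ k ∈ range (len γ), F (trunc γ k) (trunc γ (k + 1)) + F γ c := by
  rw [hlen, sum_range_succ, trunc_of_par_eq htrunc hpar hlen le_rfl, trunc_len htrunc, ← hlen,
    trunc_len htrunc]
  congr 1
  refine sum_congr rfl fun k hk => ?_
  have hk : k < len γ := mem_range.mp hk
  rw [trunc_of_par_eq htrunc hpar hlen hk.le, trunc_of_par_eq htrunc hpar hlen hk]

end Truncation

theorem laplace_apply_of_par_eq {P M : Type*} [AddCommGroup M] [Module ℝ M]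
    {len : P → ℕ} {par : P → P} {trunc : P → ℕ → P}
    (htrunc : ∀ γ k, trunc γ k = par^[len γ - k] γ) {μ G : P → ℝ} {χ : P → M} {Δ : M →ₗ[ℝ] M}
    (hΔ : ∀ γ : P, Δ (χ γ) = -∑ k ∈ range (len γ),
      (G (trunc γ k))⁻¹ •
        ((μ (trunc γ k) - μ (trunc γ (k + 1))) • χ γ -
          μ γ • (χ (trunc γ k) - χ (trunc γ (k + 1)))))
    {γ c : P} (hpar : par c = γ) (hlen : len c = len γ + 1) :
    Δ (χ c) =
      ((∑ k ∈ range (len γ), (μ (trunc γ (k + 1)) - μ (trunc γ k)) / G (trunc γ k)) -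
          μ γ / G γ) • χ c +
        μ c • (∑ k ∈ range (len γ), (G (trunc γ k))⁻¹ • (χ (trunc γ k) - χ (trunc γ (k + 1))) +
          (G γ)⁻¹ • χ γ) := by
  rw [hΔ c, sum_range_trunc_of_par_eq htrunc hpar hlen
    fun x y => (G x)⁻¹ • ((μ x - μ y) • χ c - μ c • (χ x - χ y))]
  have hsum : ∑ k ∈ range (len γ), (G (trunc γ k))⁻¹ •
        ((μ (trunc γ k) - μ (trunc γ (k + 1))) • χ c -
          μ c • (χ (trunc γ k) - χ (trunc γ (k + 1)))) =
      -(∑ k ∈ range (len γ), (μ (trunc γ (k + 1)) - μ (trunc γ k)) / G (trunc γ k)) • χ c -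
        μ c • ∑ k ∈ range (len γ), (G (trunc γ k))⁻¹ • (χ (trunc γ k) - χ (trunc γ (k + 1))) := by
    rw [neg_smul, sum_smul, smul_sum, ← sum_neg_distrib, ← sum_sub_distrib]
    refine sum_congr rfl fun k _ => ?_
    rw [div_eq_inv_mul]
    module
  rw [hsum, div_eq_inv_mul]
  module

theorem stmt_9_general (P : Type*) (M : Type*) [AddCommGroup M] [Module ℝ M]
    (len : P → ℕ) (par : P → P) (children : P → Finset P)
    (trunc : P → ℕ → P)
    (htrunc : ∀ (γ : P) (k : ℕ), trunc γ k = par^[len γ - k] γ)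
    (hchild : ∀ γ c : P, c ∈ children γ → par c = γ ∧ len c = len γ + 1)
    (μ G : P → ℝ) (hμ : ∀ γ, 0 < μ γ)
    (χ : P → M)
    (hind : ∀ γ : P, LinearIndependent ℝ (fun c : (children γ : Finset P) => χ (c : P)))
    (Δ : M →ₗ[ℝ] M)
    (hΔ : ∀ γ : P, Δ (χ γ) = -∑ k ∈ Finset.range (len γ),
      (G (trunc γ k))⁻¹ •
        ((μ (trunc γ k) - μ (trunc γ (k + 1))) • χ γ -
          μ γ • (χ (trunc γ k) - χ (trunc γ (k + 1))))) :
    ∀ γ : P,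
      (∀ a ∈ children γ, ∀ b ∈ children γ,
        Δ ((μ a)⁻¹ • χ a - (μ b)⁻¹ • χ b) =
          ((∑ k ∈ Finset.range (len γ),
              (μ (trunc γ (k + 1)) - μ (trunc γ k)) / G (trunc γ k)) - μ γ / G γ) •
            ((μ a)⁻¹ • χ a - (μ b)⁻¹ • χ b)) ∧
      Module.finrank ℝ (Submodule.span ℝ
        {v : M | ∃ a ∈ children γ, ∃ b ∈ children γ,
          a ≠ b ∧ v = (μ a)⁻¹ • χ a - (μ b)⁻¹ • χ b}) =
        (children γ).card - 1 := by
  intro γ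
  have hΔchild (c : P) (hc : c ∈ children γ) :=
    laplace_apply_of_par_eq htrunc hΔ (hchild γ c hc).1 (hchild γ c hc).2
  refine ⟨fun a ha b hb => Δ.map_inv_smul_sub_inv_smul (hμ a).ne' (hμ b).ne'
    (hΔchild a ha) (hΔchild b hb), ?_⟩
  have hnormalized : LinearIndependent ℝ fun c : children γ => (μ c)⁻¹ • χ c :=
    (hind γ).units_smul fun c => Units.mk0 _ (inv_ne_zero (hμ c).ne')
  exact finrank_span_sub_of_linearIndependent (children γ) (fun c => (μ c)⁻¹ • χ c) hnormalized

/-- spectrum of the Pearson–Bellissard Laplace–Beltrami operator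
`Δ_s`. Finite paths of the Bratteli diagram form a rooted tree `(P, len, par)`
with one-step extensions `children γ`; `trunc γ k` is the truncation `γ_k`.
`μ γ` is the measure of the cylinder `[γ]`, `G γ = G_s(γ)` the Pearson–
Bellissard normalization, `χ γ` the characteristic function of `[γ]` inside a
space of functions `M`, and `Δ` acts on the `χ γ` by the explicit formula.
Then for every finite path `γ` and any two distinct extensions `a, b` of `γ`,
`(1/μ a)·χ a − (1/μ b)·χ b` is an eigenvector of `Δ` with eigenvalue
`λ_γ = ∑_{k<|γ|} (μ γ_{k+1} − μ γ_k)/G(γ_k) − μ γ/G γ`, and the span `E_γ` of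
all such differences has dimension `n_γ − 1` where `n_γ` is the number of
extensions of `γ`. -/
theorem stmt_9 (P : Type*) (M : Type*) [AddCommGroup M] [Module ℝ M]
    (len : P → ℕ) (par : P → P) (children : P → Finset P)
    (trunc : P → ℕ → P)
    (htrunc : ∀ (γ : P) (k : ℕ), trunc γ k = par^[len γ - k] γ)
    (hchild : ∀ γ c : P, c ∈ children γ → par c = γ ∧ len c = len γ + 1)
    (μ G : P → ℝ) (hμ : ∀ γ, 0 < μ γ) (hG : ∀ γ, 0 < G γ)
    (χ : P → M)
    (hind : ∀ γ : P, LinearIndependent ℝ (fun c : (children γ : Finset P) => χ (c : P)))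
    (Δ : M →ₗ[ℝ] M)
    (hΔ : ∀ γ : P, Δ (χ γ) = -∑ k ∈ Finset.range (len γ),
      (G (trunc γ k))⁻¹ •
        ((μ (trunc γ k) - μ (trunc γ (k + 1))) • χ γ -
          μ γ • (χ (trunc γ k) - χ (trunc γ (k + 1))))) :
    ∀ γ : P,
      (∀ a ∈ children γ, ∀ b ∈ children γ,
        Δ ((μ a)⁻¹ • χ a - (μ b)⁻¹ • χ b) =
          ((∑ k ∈ Finset.range (len γ),
              (μ (trunc γ (k + 1)) - μ (trunc γ k)) / G (trunc γ k)) - μ γ / G γ) •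
            ((μ a)⁻¹ • χ a - (μ b)⁻¹ • χ b)) ∧
      Module.finrank ℝ (Submodule.span ℝ
        {v : M | ∃ a ∈ children γ, ∃ b ∈ children γ,
          a ≠ b ∧ v = (μ a)⁻¹ • χ a - (μ b)⁻¹ • χ b}) =
        (children γ).card - 1 :=
  stmt_9_general P M len par children trunc htrunc hchild μ G hμ χ hind Δ hΔ
end

section
/- Let B be a stationary Bratteli diagram for a substitution of dimension d with Perron eigenvalue θ, let Δ_s be the Pearson–Bellissard Laplacian, and let U_e be the path-extension operator inserting edge e after the root. If U_e γ ≠ 0, then the eigenvalues satisfy the affine recursion λ_{U_e γ} = θ^{(d+2−s)/d}·(λ_γ − (μ[ε]−μ[∘])/G_s(∘)) + (μ[ε']−μ[∘])/G_s(∘) + (μ[ε'e]−μ[ε'])/G_s(ε'), where γ = (ε, e_1, e_2, …) and U_e γ = (ε', e, e_1, e_2, …). -/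
/-!
Split off the root edge from `λ_γ` and the first two edges from `λ_{U_e γ}`. What remains of
`λ_{U_e γ}` is the eigenvalue expression of the tail `(e₁, e₂, …)`, in which stationarity multiplies
every measure by `θ⁻¹` and every `G_s` by `θ^{(s-2)/d-2}`; hence it is `θ⁻¹ / θ^{(s-2)/d-2} = θ^{(d+2-s)/d}`
times the tail of `λ_γ`.
-/

open Finset

noncomputable def pathEigenvalue (μ G : ℕ → ℝ) (n : ℕ) : ℝ :=
  ∑ k ∈ range n, (μ (k + 1) - μ k) / G k - μ n / G n

theorem pathEigenvalue_succ (μ G : ℕ → ℝ) (n : ℕ) :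
    pathEigenvalue μ G (n + 1) =
      (μ 1 - μ 0) / G 0 + pathEigenvalue (fun k => μ (k + 1)) (fun k => G (k + 1)) n := by
  simp only [pathEigenvalue, sum_range_succ']
  ring

theorem pathEigenvalue_of_rescale {μ G μ' G' : ℕ → ℝ} {n : ℕ} (a b : ℝ)
    (hμ : ∀ k ≤ n, μ' k = a * μ k) (hG : ∀ k ≤ n, G' k = b * G k) :
    pathEigenvalue μ' G' n = a / b * pathEigenvalue μ G n := by
  have hterm : ∀ k ∈ range n,
      (μ' (k + 1) - μ' k) / G' k = a / b * ((μ (k + 1) - μ k) / G k) := by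
    intro k hk
    have hk : k < n := mem_range.mp hk
    rw [hμ (k + 1) hk, hμ k hk.le, hG k hk.le, ← mul_sub, mul_div_mul_comm]
  rw [pathEigenvalue, pathEigenvalue, sum_congr rfl hterm, ← mul_sum, hμ n le_rfl, hG n le_rfl,
    mul_div_mul_comm, mul_sub]

theorem stmt_12_general (θ d s : ℝ) (hθ : 0 < θ) (hd : 0 < d)
    (n : ℕ) (hn : 2 ≤ n)
    (μ G μ' G' : ℕ → ℝ)
    (hμk : ∀ k, 2 ≤ k → k ≤ n + 1 → μ' k = θ⁻¹ * μ (k - 1))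
    (hGk : ∀ k, 2 ≤ k → k ≤ n + 1 → G' k = θ ^ ((s - 2) / d - 2) * G (k - 1)) :
    (∑ k ∈ Finset.range (n + 1), (μ' (k + 1) - μ' k) / G' k) - μ' (n + 1) / G' (n + 1) =
      θ ^ ((d + 2 - s) / d) *
        ((∑ k ∈ Finset.range n, (μ (k + 1) - μ k) / G k) - μ n / G n -
          (μ 1 - μ 0) / G 0) +
      (μ' 1 - μ' 0) / G' 0 + (μ' 2 - μ' 1) / G' 1 := by
  obtain ⟨m, rfl⟩ : ∃ m, n = m + 1 := ⟨n - 1, by omega⟩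
  have hscale : θ⁻¹ / θ ^ ((s - 2) / d - 2) = θ ^ ((d + 2 - s) / d) := by
    rw [← Real.rpow_neg_one, ← Real.rpow_sub hθ]
    congr 1
    field_simp
    ring
  have htail : pathEigenvalue (fun k => μ' (k + 1 + 1)) (fun k => G' (k + 1 + 1)) m =
      θ ^ ((d + 2 - s) / d) * pathEigenvalue (fun k => μ (k + 1)) (fun k => G (k + 1)) m := by
    rw [pathEigenvalue_of_rescale (μ := fun k => μ (k + 1)) (G := fun k => G (k + 1)) _ _
      (fun k hk => hμk (k + 2) (by omega) (by omega))
      (fun k hk => hGk (k + 2) (by omega) (by omega)), hscale]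
  change pathEigenvalue μ' G' (m + 1 + 1) =
    θ ^ ((d + 2 - s) / d) * (pathEigenvalue μ G (m + 1) - (μ 1 - μ 0) / G 0) + _ + _
  rw [pathEigenvalue_succ, pathEigenvalue_succ, pathEigenvalue_succ μ, htail]
  ring

/-- affine recursion for the eigenvalues of `Δ_s` under the
Cuntz–Krieger path-extension operators `U_e` on a stationary Bratteli diagram.
The path `γ = (ε, e₁, …)` of length `n` is encoded by the sequences
`μ k = μ[γ_k]`, `G k = G_s(γ_k)` (`k ≤ n`), and its extension
`U_e γ = (ε', e, e₁, …)` by `μ' k = μ[(U_e γ)_k]`, `G' k = G_s((U_e γ)_k)`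
(`k ≤ n+1`); stationarity gives `μ' k = θ⁻¹ μ (k−1)` and
`G' k = θ^{(s−2)/d − 2} G (k−1)` for `k ≥ 2`, while the root data agree:
`μ' 0 = μ 0 = μ[∘]`, `G' 0 = G 0 = G_s(∘)`. The eigenvalues
`λ_γ = ∑_{k<n} (μ(k+1) − μ k)/G k − μ n/G n` then satisfy
`λ_{U_e γ} = θ^{(d+2−s)/d} (λ_γ − (μ[ε]−μ[∘])/G_s(∘)) + (μ[ε']−μ[∘])/G_s(∘)
  + (μ[ε'e]−μ[ε'])/G_s(ε')`. -/
theorem stmt_12 (θ d s : ℝ) (hθ : 0 < θ) (hd : 0 < d)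
    (n : ℕ) (hn : 2 ≤ n)
    (μ G μ' G' : ℕ → ℝ)
    (hGne : ∀ k, G k ≠ 0) (hG'ne : ∀ k, G' k ≠ 0)
    (h0 : μ' 0 = μ 0) (hg0 : G' 0 = G 0)
    (hμk : ∀ k, 2 ≤ k → k ≤ n + 1 → μ' k = θ⁻¹ * μ (k - 1))
    (hGk : ∀ k, 2 ≤ k → k ≤ n + 1 → G' k = θ ^ ((s - 2) / d - 2) * G (k - 1)) :
    (∑ k ∈ Finset.range (n + 1), (μ' (k + 1) - μ' k) / G' k) - μ' (n + 1) / G' (n + 1) =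
      θ ^ ((d + 2 - s) / d) *
        ((∑ k ∈ Finset.range n, (μ (k + 1) - μ k) / G k) - μ n / G n -
          (μ 1 - μ 0) / G 0) +
      (μ' 1 - μ' 0) / G' 0 + (μ' 2 - μ' 1) / G' 1 :=
  stmt_12_general θ d s hθ hd n hn μ G μ' G' hμk hGk
end

section
/- (Weyl asymptotics) Let Δ_s be the Laplacian on a stationary Bratteli diagram, with eigenvalues satisfying x_− Λ^n + y_− ≤ |λ_γ| ≤ x_+ Λ^n + y_+ for γ of length n, where Λ = θ^{(d+2−s)/d} > 1 (i.e., s < d+2), and with c_1 θ^n ≤ Card(Π_n) ≤ c_2 θ^n. Let N(λ) be the number of eigenvalues (with multiplicity) of modulus at most λ. Then there exist constants 0 < c_− < c_+ such that c_− λ^{d/(d−s+2)} ≤ N(λ) ≤ c_+ λ^{d/(d−s+2)} as λ → +∞. In particular, for s = d, N(λ) ≍ λ^{d/2}. -/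
/-! Level `n` contributes all of its `Card Π_n ≍ θⁿ` eigenvalues to `N t` once
`x₊Λⁿ + y₊ ≤ t`, and none once `x₋Λⁿ + y₋ > t`. Choosing `n` with `Λⁿ ≍ t`, the lower bound
comes from one full level and the upper bound from the geometric sum over the levels below it;
since `θ = Λ ^ (d / (d - s + 2))`, both are `≍ t ^ (d / (d - s + 2))`. -/

open Finset Real

section Counting

variable {P : ℕ → Type} [∀ n, Fintype (P n)] (lam : ∀ n, P n → ℝ) {t : ℝ} {m : ℕ}

theorem card_le_sum_card_filter (hm : ∀ n, m ≤ n → ∀ γ : P n, t < |lam n γ|) {n : ℕ}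
    (hn : ∀ γ : P n, |lam n γ| ≤ t) :
    Fintype.card (P n) ≤ ∑ k ∈ range m, #{γ : P k | |lam k γ| ≤ t} := by
  by_cases hnm : n < m
  · calc Fintype.card (P n) = #{γ : P n | |lam n γ| ≤ t} := by
          rw [filter_true_of_mem fun γ _ => hn γ, card_univ]
      _ ≤ _ := single_le_sum (f := fun k => #{γ : P k | |lam k γ| ≤ t})
          (fun _ _ => Nat.zero_le _) (mem_range.mpr hnm)
  · have : IsEmpty (P n) := ⟨fun γ => (hn γ).not_gt (hm n (not_lt.mp hnm) γ)⟩
    simp [Fintype.card_eq_zero]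

theorem mul_rpow_le_sum_card_filter {Λ α c xp yp : ℝ} (hΛ : 1 < Λ) (hα : 0 ≤ α) (hc : 0 ≤ c)
    (hxp : 0 < xp) (hyp : 0 ≤ yp) (hcard : ∀ n, c * (Λ ^ α) ^ n ≤ Fintype.card (P n))
    (hlam : ∀ n (γ : P n), |lam n γ| ≤ xp * Λ ^ n + yp)
    (hm : ∀ n, m ≤ n → ∀ γ : P n, t < |lam n γ|) (ht : xp + 2 * yp ≤ t) :
    c * (2 * xp * Λ)⁻¹ ^ α * t ^ α ≤ ∑ k ∈ range m, #{γ : P k | |lam k γ| ≤ t} := by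
  have hΛ0 : 0 < Λ := zero_lt_one.trans hΛ
  obtain ⟨n, hn, hn'⟩ := exists_nat_pow_near (x := (t - yp) / xp)
    ((one_le_div hxp).mpr (by linarith)) hΛ
  rw [le_div_iff₀ hxp] at hn
  rw [div_lt_iff₀ hxp, pow_succ] at hn'
  have hlevel : ∀ γ : P n, |lam n γ| ≤ t := fun γ => (hlam n γ).trans (by linarith)
  have hscale : t * (2 * xp * Λ)⁻¹ ≤ Λ ^ n := by
    rw [← div_eq_mul_inv, div_le_iff₀ (by positivity)]
    nlinarith
  calc c * (2 * xp * Λ)⁻¹ ^ α * t ^ α = c * (t * (2 * xp * Λ)⁻¹) ^ α := by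
        rw [mul_rpow (by linarith) (by positivity)]; ring
    _ ≤ c * (Λ ^ n) ^ α := by
        have : 0 ≤ t := by linarith
        gcongr
    _ = c * (Λ ^ α) ^ n := by rw [rpow_pow_comm hΛ0.le]
    _ ≤ _ := (hcard n).trans (by exact_mod_cast card_le_sum_card_filter lam hm hlevel)

theorem sum_card_filter_le_mul_rpow {Λ α c xm ym : ℝ} (hΛ : 1 < Λ) (hα : 0 < α) (hc : 0 ≤ c)
    (hxm : 0 < xm) (hym : 0 ≤ ym) (hcard : ∀ n, (Fintype.card (P n) : ℝ) ≤ c * (Λ ^ α) ^ n)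
    (hlam : ∀ n (γ : P n), xm * Λ ^ n + ym ≤ |lam n γ|) (ht : xm ≤ t) :
    ∃ m, (∀ n, m ≤ n → ∀ γ : P n, t < |lam n γ|) ∧
      ∑ k ∈ range m, (#{γ : P k | |lam k γ| ≤ t} : ℝ) ≤ c * (Λ / xm) ^ α / (Λ ^ α - 1) * t ^ α := by
  have hΛ0 : 0 < Λ := zero_lt_one.trans hΛ
  have hΛα : 1 < Λ ^ α := one_lt_rpow hΛ hα
  obtain ⟨k, hk, hk'⟩ := exists_nat_pow_near ((one_le_div hxm).mpr ht) hΛ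
  rw [le_div_iff₀ hxm] at hk
  rw [div_lt_iff₀ hxm] at hk'
  refine ⟨k + 1, fun n hn γ => ?_, ?_⟩
  · have : Λ ^ (k + 1) ≤ Λ ^ n := pow_le_pow_right₀ hΛ.le hn
    nlinarith [hlam n γ]
  have hscale : Λ ^ (k + 1) ≤ Λ / xm * t := by
    rw [pow_succ, div_mul_eq_mul_div, le_div_iff₀ hxm]
    nlinarith
  calc ∑ i ∈ range (k + 1), (#{γ : P i | |lam i γ| ≤ t} : ℝ)
      ≤ ∑ n ∈ range (k + 1), c * (Λ ^ α) ^ n :=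
        sum_le_sum fun n _ => (Nat.cast_le.mpr (card_filter_le _ _)).trans (hcard n)
    _ = c * (((Λ ^ α) ^ (k + 1) - 1) / (Λ ^ α - 1)) := by rw [← mul_sum, geom_sum_eq hΛα.ne']
    _ ≤ c * ((Λ ^ α) ^ (k + 1) / (Λ ^ α - 1)) := by
        gcongr
        linarith
    _ = c * (Λ ^ (k + 1)) ^ α / (Λ ^ α - 1) := by rw [rpow_pow_comm hΛ0.le]; ring
    _ ≤ c * (Λ / xm * t) ^ α / (Λ ^ α - 1) := by gcongr
    _ = c * (Λ / xm) ^ α / (Λ ^ α - 1) * t ^ α := by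
        rw [mul_rpow (by positivity) (by linarith)]; ring

end Counting

/-- Weyl asymptotics: for `s < d+2`, with
`Λ = θ^{(d+2−s)/d} > 1`, eigenvalue moduli `xmΛⁿ + ym ≤ |λ_γ| ≤ xpΛⁿ + yp`
for `γ ∈ Π_n` and `c₁θⁿ ≤ Card(Π_n) ≤ c₂θⁿ`, the eigenvalue counting
function `N(λ)` (number of eigenvalues, counted with multiplicity via paths,
of modulus `≤ λ`) satisfies
`cm λ^{d/(d−s+2)} ≤ N(λ) ≤ cp λ^{d/(d−s+2)}` as `λ → ∞`. -/
theorem stmt_15 (θ d s : ℝ) (hθ : 1 < θ) (hd : 0 < d) (hs : s < d + 2)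
    (P : ℕ → Type) [∀ n, Fintype (P n)]
    (c1 c2 : ℝ) (hc1 : 0 < c1) (hc2 : c1 ≤ c2)
    (hcard : ∀ n : ℕ, c1 * θ ^ (n : ℝ) ≤ (Fintype.card (P n) : ℝ) ∧
      (Fintype.card (P n) : ℝ) ≤ c2 * θ ^ (n : ℝ))
    (lam : ∀ n, P n → ℝ)
    (xm xp ym yp : ℝ) (hx : 0 < xm) (hxx : xm ≤ xp) (hy : 0 < ym) (hyy : ym ≤ yp)
    (hlam : ∀ (n : ℕ) (γ : P n),
      xm * (θ ^ ((d + 2 - s) / d)) ^ n + ym ≤ |lam n γ| ∧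
      |lam n γ| ≤ xp * (θ ^ ((d + 2 - s) / d)) ^ n + yp)
    (N : ℝ → ℕ)
    (hN : ∀ (t : ℝ) (m : ℕ), (∀ n, m ≤ n → ∀ γ : P n, t < |lam n γ|) →
      N t = ∑ n ∈ Finset.range m,
        (Finset.univ.filter (fun γ : P n => |lam n γ| ≤ t)).card) :
    ∃ cm cp : ℝ, 0 < cm ∧ cm < cp ∧
      ∀ᶠ t : ℝ in Filter.atTop,
        cm * t ^ (d / (d - s + 2)) ≤ (N t : ℝ) ∧
        (N t : ℝ) ≤ cp * t ^ (d / (d - s + 2)) := by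
  set Λ := θ ^ ((d + 2 - s) / d)
  set α := d / (d - s + 2)
  have hd2 : 0 < d - s + 2 := by linarith
  have hα : 0 < α := div_pos hd hd2
  have hΛ : 1 < Λ := one_lt_rpow hθ (div_pos (by linarith) hd)
  have hθΛ : θ = Λ ^ α := by
    rw [← rpow_mul (by linarith), div_mul_div_comm, show (d + 2 - s) * d = d * (d - s + 2) by ring,
      div_self (mul_pos hd hd2).ne', rpow_one]
  have hcard' : ∀ n, c1 * (Λ ^ α) ^ n ≤ Fintype.card (P n) ∧
      (Fintype.card (P n) : ℝ) ≤ c2 * (Λ ^ α) ^ n := fun n => by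
    rw [← hθΛ, ← rpow_natCast]; exact hcard n
  have hxp : 0 < xp := hx.trans_le hxx
  set cm := c1 * (2 * xp * Λ)⁻¹ ^ α
  set cp := c2 * (Λ / xm) ^ α / (Λ ^ α - 1)
  have hcm : 0 < cm := by positivity
  refine ⟨cm, max cp (cm + 1), hcm, by simp, ?_⟩
  filter_upwards [Filter.eventually_ge_atTop (xp + 2 * yp)] with t ht
  obtain ⟨m, hm, hupper⟩ := sum_card_filter_le_mul_rpow lam hΛ hα (hc1.le.trans hc2) hx hy.le
    (fun n => (hcard' n).2) (fun n γ => (hlam n γ).1) (by linarith)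
  rw [hN t m hm]
  push_cast
  refine ⟨mod_cast mul_rpow_le_sum_card_filter lam hΛ hα.le hc1.le hxp (hy.le.trans hyy)
    (fun n => (hcard' n).1) (fun n γ => (hlam n γ).2) hm ht, hupper.trans ?_⟩
  exact mul_le_mul_of_nonneg_right (le_max_left _ _) (rpow_nonneg (by linarith) α)
end

section
/- (Thue–Morse spectrum) For the Laplacian Δ at s = s_0 = 1 on the Thue–Morse Bratteli diagram (stationary diagram with two vertices per level, all cylinder measures μ[γ] = 2^{-n} for γ of length n, weights w(γ) = 2^{-n}), the nonzero eigenvalues are λ_n = −(2/3)(7·4^{n−1} − 1) for n ≥ 1, each with multiplicity 2^{n−1}, and they satisfy the recursion λ_{n+1} = 4 λ_n − 2. The corresponding eigenvectors are the Haar-type functions φ_{n,γ} = χ_γ − τ̃_n χ_γ for γ ∈ Π_n, where τ̃_n flips the n-th symbol of the path. -/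
/-!
If `γ` and `γ'` are siblings (paths of length `m + 1` with the same parent), every prefix term
of the Pearson–Bellissard formula is the same for both except the last one, so
`Δ (χ γ - χ γ')` is a multiple of `χ γ - χ γ'`; the factor `-(∑_{k<m} 2^(2k+1) + 2^(2m+2))` is a
geometric sum, which equals `-(2/3)(7·4^m - 1)`. The Haar functions are `±(χ (δ0) - χ (δ1))` for
`δ ∈ Π_m`, and these `2^m` differences of distinct basis vectors are linearly independent.
-/

open Finset

theorem LinearIndependent.sub_of_sumElim {ι R M : Type*} [Fintype ι] [Ring R] [AddCommGroup M]
    [Module R M] {u w : ι → M} (h : LinearIndependent R (Sum.elim u w)) :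
    LinearIndependent R (u - w) := by
  rw [Fintype.linearIndependent_iff] at h ⊢
  intro c hc i
  refine h (Sum.elim c (-c)) ?_ (Sum.inl i)
  simpa [Fintype.sum_sum_type, smul_sub, sub_eq_add_neg, sum_add_distrib] using hc

namespace ThueMorse

/-- The eigenvalue `λ_n`. -/
noncomputable def eigenvalue (n : ℕ) : ℝ := -(2 / 3) * (7 * 4 ^ (n - 1) - 1)

theorem eigenvalue_succ {n : ℕ} (hn : 1 ≤ n) : eigenvalue (n + 1) = 4 * eigenvalue n - 2 := by
  obtain ⟨m, rfl⟩ := Nat.exists_eq_add_of_le' hn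
  simp only [eigenvalue, Nat.add_sub_cancel, pow_succ]
  ring

theorem sum_range_two_pow_two_mul_add_one (m : ℕ) :
    ∑ k ∈ range m, (2 : ℝ) ^ (2 * k + 1) = 2 / 3 * (4 ^ m - 1) := by
  induction m with
  | zero => simp
  | succ m ih =>
    rw [sum_range_succ, ih, pow_succ, pow_mul]
    ring

theorem eigenvalue_succ_eq_neg_sum (m : ℕ) :
    eigenvalue (m + 1) = -(∑ j : Fin m, (2 : ℝ) ^ (2 * (j : ℕ) + 1) + 2 ^ (2 * m + 2)) := by
  rw [Fin.sum_univ_eq_sum_range (fun j => (2 : ℝ) ^ (2 * j + 1)),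
    sum_range_two_pow_two_mul_add_one, eigenvalue, Nat.add_sub_cancel,
    show 2 * m + 2 = 2 * (m + 1) by ring, pow_mul, pow_succ]
  norm_num
  ring

/-- `τ̃_n` on paths of length `n`: flip the `n`-th (last) symbol. -/
def flipLast {n : ℕ} (γ : Fin n → Bool) : Fin n → Bool :=
  fun i => if (i : ℕ) = n - 1 then !(γ i) else γ i

theorem init_flipLast {m : ℕ} (γ : Fin (m + 1) → Bool) : Fin.init (flipLast γ) = Fin.init γ := by
  funext j
  simp [flipLast, Fin.init, j.2.ne]

theorem flipLast_snoc {m : ℕ} (δ : Fin m → Bool) (c : Bool) :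
    flipLast (Fin.snoc δ c : Fin (m + 1) → Bool) = Fin.snoc δ (!c) := by
  funext i
  induction i using Fin.lastCases with
  | last => simp [flipLast]
  | cast j => simp [flipLast, j.2.ne]

section Laplacian

variable {M : Type*} [AddCommGroup M] [Module ℝ M] (χ : ∀ n : ℕ, (Fin n → Bool) → M)

/-- The `k`-th summand of the Pearson–Bellissard formula for `-Δ (χ n γ)`; `Fin.take k _ γ` is
the prefix `γ_k`, and `2^(3k+2) = 1 / G(γ_k)`. -/
noncomputable def pbTerm (n : ℕ) (γ : Fin n → Bool) (k : Fin n) : M :=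
  ((2 : ℝ) ^ (3 * (k : ℕ) + 2)) •
    ((((2 : ℝ) ^ (k : ℕ))⁻¹ - ((2 : ℝ) ^ ((k : ℕ) + 1))⁻¹) • χ n γ -
      ((2 : ℝ) ^ n)⁻¹ • (χ k (Fin.take k k.2.le γ) - χ (k + 1) (Fin.take (k + 1) k.2 γ)))

theorem pbTerm_castSucc {m : ℕ} (γ : Fin (m + 1) → Bool) (j : Fin m) :
    pbTerm χ (m + 1) γ j.castSucc =
      ((2 : ℝ) ^ (3 * (j : ℕ) + 2)) •
        ((((2 : ℝ) ^ (j : ℕ))⁻¹ - ((2 : ℝ) ^ ((j : ℕ) + 1))⁻¹) • χ (m + 1) γ -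
          ((2 : ℝ) ^ (m + 1))⁻¹ • (χ j (Fin.take j j.2.le (Fin.init γ)) -
            χ (j + 1) (Fin.take (j + 1) j.2 (Fin.init γ)))) :=
  rfl

theorem pbTerm_last {m : ℕ} (γ : Fin (m + 1) → Bool) :
    pbTerm χ (m + 1) γ (Fin.last m) =
      ((2 : ℝ) ^ (3 * m + 2)) •
        ((((2 : ℝ) ^ m)⁻¹ - ((2 : ℝ) ^ (m + 1))⁻¹) • χ (m + 1) γ -
          ((2 : ℝ) ^ (m + 1))⁻¹ • (χ m (Fin.init γ) - χ (m + 1) γ)) :=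
  rfl

variable {χ}

theorem pbTerm_castSucc_sub_of_init_eq {m : ℕ} {γ γ' : Fin (m + 1) → Bool}
    (h : Fin.init γ = Fin.init γ') (j : Fin m) :
    pbTerm χ (m + 1) γ j.castSucc - pbTerm χ (m + 1) γ' j.castSucc =
      (2 : ℝ) ^ (2 * (j : ℕ) + 1) • (χ (m + 1) γ - χ (m + 1) γ') := by
  have hcoef : (2 : ℝ) ^ (3 * (j : ℕ) + 2) * (((2 : ℝ) ^ (j : ℕ))⁻¹ - ((2 : ℝ) ^ ((j : ℕ) + 1))⁻¹)
      = 2 ^ (2 * (j : ℕ) + 1) := by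
    field_simp
    ring
  rw [pbTerm_castSucc, pbTerm_castSucc, h, ← hcoef]
  module

theorem pbTerm_last_sub_of_init_eq {m : ℕ} {γ γ' : Fin (m + 1) → Bool}
    (h : Fin.init γ = Fin.init γ') :
    pbTerm χ (m + 1) γ (Fin.last m) - pbTerm χ (m + 1) γ' (Fin.last m) =
      (2 : ℝ) ^ (2 * m + 2) • (χ (m + 1) γ - χ (m + 1) γ') := by
  have hcoef : (2 : ℝ) ^ (3 * m + 2) * (((2 : ℝ) ^ m)⁻¹ - ((2 : ℝ) ^ (m + 1))⁻¹) +
      (2 : ℝ) ^ (3 * m + 2) * ((2 : ℝ) ^ (m + 1))⁻¹ = 2 ^ (2 * m + 2) := by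
    field_simp
    ring
  rw [pbTerm_last, pbTerm_last, h, ← hcoef]
  module

theorem apply_chi_sub_chi_of_init_eq (Δ : M →ₗ[ℝ] M)
    (hΔ : ∀ (n : ℕ) (γ : Fin n → Bool), Δ (χ n γ) = -∑ k, pbTerm χ n γ k)
    {m : ℕ} {γ γ' : Fin (m + 1) → Bool} (h : Fin.init γ = Fin.init γ') :
    Δ (χ (m + 1) γ - χ (m + 1) γ') = eigenvalue (m + 1) • (χ (m + 1) γ - χ (m + 1) γ') := by
  rw [map_sub, hΔ, hΔ, neg_sub_neg, ← neg_sub, ← sum_sub_distrib, Fin.sum_univ_castSucc,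
    pbTerm_last_sub_of_init_eq h]
  simp only [pbTerm_castSucc_sub_of_init_eq h]
  rw [← sum_smul, ← add_smul, ← neg_smul, eigenvalue_succ_eq_neg_sum]

theorem finrank_span_chi_sub_chi_flipLast {m : ℕ} (hχ : LinearIndependent ℝ (χ (m + 1))) :
    Module.finrank ℝ (Submodule.span ℝ
      {v : M | ∃ γ : Fin (m + 1) → Bool, v = χ (m + 1) γ - χ (m + 1) (flipLast γ)}) = 2 ^ m := by
  set b := (fun δ : Fin m → Bool => χ (m + 1) (Fin.snoc δ false)) -
    (fun δ => χ (m + 1) (Fin.snoc δ true))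
  have hb : LinearIndependent ℝ b := by
    refine LinearIndependent.sub_of_sumElim ?_
    have := hχ.comp _ <| (Fin.snoc_left_injective false).sumElim (Fin.snoc_left_injective true)
      fun δ δ' h => Bool.false_ne_true (Fin.snoc_injective2 h).2
    rwa [Sum.comp_elim] at this
  have hspan : Submodule.span ℝ
      {v : M | ∃ γ : Fin (m + 1) → Bool, v = χ (m + 1) γ - χ (m + 1) (flipLast γ)} =
      Submodule.span ℝ (Set.range b) := by
    apply le_antisymm <;> rw [Submodule.span_le]
    · rintro v ⟨γ, rfl⟩
      obtain ⟨δ, c, rfl⟩ : ∃ δ c, γ = Fin.snoc δ c := ⟨_, _, (Fin.snoc_init_self γ).symm⟩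
      rw [flipLast_snoc]
      cases c
      · exact Submodule.subset_span ⟨δ, rfl⟩
      · rw [← neg_sub]
        exact neg_mem (Submodule.subset_span ⟨δ, rfl⟩)
    · rintro v ⟨δ, rfl⟩
      exact Submodule.subset_span ⟨Fin.snoc δ false, by rw [flipLast_snoc]; rfl⟩
  rw [hspan, finrank_span_eq_card hb, Fintype.card_fun, Fintype.card_bool, Fintype.card_fin]

end Laplacian

end ThueMorse

/-- Thue–Morse spectrum: on the Thue–Morse Bratteli diagram,
paths of length `n` are binary words `γ : Fin n → Bool`, with cylinder
measures `μ[γ] = 2^{−n}`, weights `2^{−n}`, and `G(η) = 2^{−3k−2}` for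
`|η| = k`; the Laplacian `Δ = Δ₁` acts on the characteristic functions
`χ n γ` by the Pearson–Bellissard formula. Then for `n ≥ 1` the Haar-type
functions `φ_{n,γ} = χ_γ − τ̃_n χ_γ` (τ̃_n flips the `n`-th symbol) are
eigenvectors with eigenvalue `λ_n = −(2/3)(7·4^{n−1} − 1)`, the eigenvalues
satisfy `λ_{n+1} = 4λ_n − 2`, and the `λ_n`-eigenspace (the span of the
`φ_{n,γ}`, `γ ∈ Π_n`) has dimension `2^{n−1}`. -/
theorem stmt_19 (M : Type*) [AddCommGroup M] [Module ℝ M]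
    (χ : ∀ n : ℕ, (Fin n → Bool) → M)
    (Δ : M →ₗ[ℝ] M)
    (hΔ : ∀ (n : ℕ) (γ : Fin n → Bool),
      Δ (χ n γ) = -∑ k : Fin n,
        ((2 : ℝ) ^ (3 * (k : ℕ) + 2)) •
          ((((2 : ℝ) ^ (k : ℕ))⁻¹ - ((2 : ℝ) ^ ((k : ℕ) + 1))⁻¹) • χ n γ -
            ((2 : ℝ) ^ n)⁻¹ •
              (χ (k : ℕ) (fun i => γ ⟨i.1, lt_of_lt_of_le i.2 (le_of_lt k.2)⟩) -
               χ ((k : ℕ) + 1) (fun i => γ ⟨i.1, lt_of_lt_of_le i.2 k.2⟩))))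
    (hind : ∀ n, LinearIndependent ℝ (χ n)) :
    (∀ n : ℕ, 1 ≤ n → ∀ γ : Fin n → Bool,
      Δ (χ n γ - χ n (fun i => if (i : ℕ) = n - 1 then !(γ i) else γ i)) =
        (-(2 / 3) * (7 * (4 : ℝ) ^ (n - 1) - 1)) •
          (χ n γ - χ n (fun i => if (i : ℕ) = n - 1 then !(γ i) else γ i))) ∧
    (∀ n : ℕ, 1 ≤ n →
      -(2 / 3) * (7 * (4 : ℝ) ^ ((n + 1) - 1) - 1) =
        4 * (-(2 / 3) * (7 * (4 : ℝ) ^ (n - 1) - 1)) - 2) ∧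
    (∀ n : ℕ, 1 ≤ n →
      Module.finrank ℝ (Submodule.span ℝ
        {v : M | ∃ γ : Fin n → Bool,
          v = χ n γ - χ n (fun i => if (i : ℕ) = n - 1 then !(γ i) else γ i)}) =
        2 ^ (n - 1)) := by
  refine ⟨fun n hn γ => ?_, fun n hn => ThueMorse.eigenvalue_succ hn, fun n hn => ?_⟩
  · obtain ⟨m, rfl⟩ := Nat.exists_eq_add_of_le' hn
    exact ThueMorse.apply_chi_sub_chi_of_init_eq Δ hΔ (ThueMorse.init_flipLast γ).symm
  · obtain ⟨m, rfl⟩ := Nat.exists_eq_add_of_le' hn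
    exact ThueMorse.finrank_span_chi_sub_chi_flipLast (hind (m + 1))
end
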